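/- Let τ be a critical binary Galton–Watson tree (μ_2(0) = μ_2(2) = 1/2). For all p ∈ ℕ and s ∈ (0,1), E[s^{#τ} | S(τ) = p] = 2^{p+1}·sinh(a(s))/sinh(2^{p+1}·a(s)), where a(s) > 0 is determined by cosh(a(s)) = 1/s. -/

import Mathlib

open MeasureTheory

/-- Finite rooted plane trees. -/
inductive PTree : Type where
  | node : List PTree → PTree

namespace PTree

/-- Number of vertices. -/
def size : PTree → ℕ
  | node ts => 1 + (ts.attach.map (fun s => size s.1)).sum
decreasing_by simp_wf; have := List.sizeOf_lt_of_mem s.2; (try simp only [List.cons.sizeOf_spec, PTree.node.sizeOf_spec] at this ⊢); omega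

/-- The Horton–Strahler number. -/
def hs : PTree → ℕ
  | node ts =>
    let vals := ts.attach.map (fun s => hs s.1)
    vals.foldr max 0 + (if 2 ≤ vals.count (vals.foldr max 0) then 1 else 0)
decreasing_by simp_wf; have := List.sizeOf_lt_of_mem s.2; (try simp only [List.cons.sizeOf_spec, PTree.node.sizeOf_spec] at this ⊢); omega

end PTree

/-- `PTree` is a countable type; we equip it with the discrete σ-algebra. -/
instance : MeasurableSpace PTree := ⊤

/-!
A tree has Strahler number `p + 1` iff one subtree of the root has number `p + 1` and the other
at most `p`, or both have number `p`. Writing `F_p = E[s^{#τ}; S(τ) = p]` and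
`G_p = E[s^{#τ}; S(τ) ≤ p]`, the branching identity therefore gives
`2 F_{p+1} = s (2 F_{p+1} G_p + F_p²)`, `G_{p+1} = G_p + F_{p+1}` and `F_0 = G_0 = s/2`, which
determine `F` as long as `s G_p ≠ 1`. For `s = 1 / cosh a` and `X = 2^{p+1} a` the double-angle
formulas show that `sinh a / sinh X` and `sinh (X - a) / sinh X` solve this system; the same
system with `s = 1` gives `P(S(τ) = p) = 2^{-(p+1)}`.
-/

open scoped ENNReal

namespace PTree

@[simp] lemma size_leaf : (node []).size = 1 := by simp [size]

@[simp] lemma hs_leaf : (node []).hs = 0 := by simp [hs]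

lemma size_pair (x y : PTree) : (node [x, y]).size = x.size + y.size + 1 := by
  simp [size]; ring

lemma hs_pair (x y : PTree) :
    (node [x, y]).hs = max x.hs y.hs + if x.hs = y.hs then 1 else 0 := by
  rcases lt_trichotomy x.hs y.hs with h | h | h
  · simp [hs, h.ne, h.le]
  · simp [hs, h]
  · simp [hs, h.ne', h.le]

lemma hs_pair_ne_zero (x y : PTree) : (node [x, y]).hs ≠ 0 := by
  rw [hs_pair]; split_ifs <;> omega

lemma hs_pair_eq_succ_iff (x y : PTree) (p : ℕ) :
    (node [x, y]).hs = p + 1 ↔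
      x.hs = p + 1 ∧ y.hs ≤ p ∨ x.hs ≤ p ∧ y.hs = p + 1 ∨ x.hs = p ∧ y.hs = p := by
  rw [hs_pair]; split_ifs <;> omega

end PTree

namespace Real

lemma sinh_div_sinh_two_mul {a : ℝ} (ha : a ≠ 0) :
    sinh a / sinh (2 * a) = (cosh a)⁻¹ / 2 := by
  have : sinh a ≠ 0 := sinh_ne_zero.2 ha
  have := (cosh_pos a).ne'
  rw [sinh_two_mul]
  field_simp

lemma sinh_sub_div_sinh_add_sinh_div_sinh_two_mul (a : ℝ) {X : ℝ} (hX : X ≠ 0) :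
    sinh (X - a) / sinh X + sinh a / sinh (2 * X) = sinh (2 * X - a) / sinh (2 * X) := by
  have : sinh X ≠ 0 := sinh_ne_zero.2 hX
  have := (cosh_pos X).ne'
  rw [sinh_sub, sinh_sub, sinh_two_mul, cosh_two_mul]
  field_simp
  linear_combination (-sinh a) * cosh_sq_sub_sinh_sq X

lemma two_mul_sinh_div_sinh_two_mul (a : ℝ) {X : ℝ} (hX : X ≠ 0) :
    2 * (sinh a / sinh (2 * X)) = (cosh a)⁻¹ *
      (2 * (sinh a / sinh (2 * X)) * (sinh (X - a) / sinh X) + (sinh a / sinh X) ^ 2) := by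
  have : sinh X ≠ 0 := sinh_ne_zero.2 hX
  have := (cosh_pos X).ne'
  have := (cosh_pos a).ne'
  rw [sinh_sub, sinh_two_mul]
  field_simp
  ring

lemma sinh_sub_div_sinh_lt_cosh {a X : ℝ} (ha : 0 < a) (hX : 0 < X) :
    sinh (X - a) / sinh X < cosh a := by
  have := sinh_pos_iff.2 hX
  rw [div_lt_iff₀ this, sinh_sub]
  nlinarith [sinh_pos_iff.2 ha, cosh_pos X]

end Real

section GaltonWatson

variable {P : Measure PTree} {v : PTree → ℝ≥0∞} {C : ℝ≥0∞}

lemma indicator_hs_eq_succ_pair (hv : ∀ x y, v (.node [x, y]) = C * (v x * v y))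
    (p : ℕ) (x y : PTree) :
    {t | t.hs = p + 1}.indicator v (.node [x, y]) =
      C * ({t | t.hs = p + 1}.indicator v x * {t | t.hs ≤ p}.indicator v y
        + {t | t.hs ≤ p}.indicator v x * {t | t.hs = p + 1}.indicator v y
        + {t | t.hs = p}.indicator v x * {t | t.hs = p}.indicator v y) := by
  simp only [Set.indicator_apply, Set.mem_ofPred_eq, PTree.hs_pair_eq_succ_iff]
  split_ifs <;> first | omega | simp [hv]

lemma setLIntegral_hs_le_succ (p : ℕ) :
    ∫⁻ t in {t | t.hs ≤ p + 1}, v t ∂P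
      = ∫⁻ t in {t | t.hs ≤ p}, v t ∂P + ∫⁻ t in {t | t.hs = p + 1}, v t ∂P := by
  have hunion : {t : PTree | t.hs ≤ p + 1} = {t | t.hs ≤ p} ∪ {t | t.hs = p + 1} := by
    ext t; simp only [Set.mem_union, Set.mem_ofPred_eq]; omega
  rw [hunion, lintegral_union .of_discrete]
  exact Set.disjoint_left.2 fun t (h₁ : t.hs ≤ p) (h₂ : t.hs = p + 1) => by omega

variable (hbranch : ∀ f : PTree → ℝ≥0∞,
    ∫⁻ t, f t ∂P
      = (1/2) * f (.node [])
        + (1/2) * ∫⁻ q : PTree × PTree, f (.node [q.1, q.2]) ∂(P.prod P))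
include hbranch

lemma setLIntegral_hs_eq_zero : ∫⁻ t in {t | t.hs = 0}, v t ∂P = 2⁻¹ * v (.node []) := by
  rw [← lintegral_indicator .of_discrete, hbranch]
  simp [PTree.hs_pair_ne_zero]

lemma two_mul_setLIntegral_hs_eq_succ [SFinite P]
    (hv : ∀ x y, v (.node [x, y]) = C * (v x * v y)) (p : ℕ) :
    2 * ∫⁻ t in {t | t.hs = p + 1}, v t ∂P
      = C * (2 * (∫⁻ t in {t | t.hs = p + 1}, v t ∂P)
            * (∫⁻ t in {t | t.hs ≤ p}, v t ∂P)
          + (∫⁻ t in {t | t.hs = p}, v t ∂P) ^ 2) := by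
  have hprod (A B : Set PTree) :
      ∫⁻ q : PTree × PTree, A.indicator v q.1 * B.indicator v q.2 ∂(P.prod P)
        = (∫⁻ t in A, v t ∂P) * ∫⁻ t in B, v t ∂P := by
    rw [lintegral_prod_mul (by fun_prop) (by fun_prop), lintegral_indicator .of_discrete,
      lintegral_indicator .of_discrete]
  conv_lhs => rw [← lintegral_indicator .of_discrete, hbranch]
  simp only [indicator_hs_eq_succ_pair hv]
  rw [lintegral_const_mul _ (by fun_prop), lintegral_add_left (by fun_prop),
    lintegral_add_left (by fun_prop), hprod, hprod, hprod]
  simp only [Set.indicator_apply, PTree.hs_leaf, Set.mem_ofPred_eq, Nat.zero_ne_add_one,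
    if_false, mul_zero, zero_add, one_div, ← mul_assoc,
    ENNReal.mul_inv_cancel two_ne_zero ENNReal.ofNat_ne_top, one_mul]
  ring

theorem setLIntegral_hs_eq_ofReal [IsFiniteMeasure P] (hv_le : ∀ t, v t ≤ 1)
    {c : ℝ} (hc : 0 ≤ c) (hv : ∀ x y, v (.node [x, y]) = ENNReal.ofReal c * (v x * v y))
    {f g : ℕ → ℝ} (hf_zero : f 0 = (v (.node [])).toReal / 2) (hg_zero : g 0 = f 0)
    (hf_succ : ∀ p, 2 * f (p + 1) = c * (2 * f (p + 1) * g p + f p ^ 2))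
    (hg_succ : ∀ p, g (p + 1) = g p + f (p + 1)) (hcg : ∀ p, c * g p ≠ 1) (p : ℕ) :
    ∫⁻ t in {t | t.hs = p}, v t ∂P = ENNReal.ofReal (f p) := by
  have hfin (A : Set PTree) : ∫⁻ t in A, v t ∂P ≠ ∞ :=
    (setLIntegral_lt_top_of_le_nnreal (measure_ne_top P A)
      ⟨1, fun t _ => by simpa using hv_le t⟩).ne
  suffices h : ∀ p, (∫⁻ t in {t | t.hs = p}, v t ∂P).toReal = f p
      ∧ (∫⁻ t in {t | t.hs ≤ p}, v t ∂P).toReal = g p by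
    rw [← (h p).1, ENNReal.ofReal_toReal (hfin _)]
  intro p
  induction p with
  | zero =>
    have hF : (∫⁻ t in {t | t.hs = 0}, v t ∂P).toReal = f 0 := by
      rw [setLIntegral_hs_eq_zero hbranch, ENNReal.toReal_mul, hf_zero]
      simp [div_eq_inv_mul]
    exact ⟨hF, by simpa [hg_zero] using hF⟩
  | succ p ih =>
    obtain ⟨hF, hG⟩ := ih
    set x := (∫⁻ t in {t | t.hs = p + 1}, v t ∂P).toReal
    have hx : 2 * x = c * (2 * x * g p + f p ^ 2) := by
      have := congrArg ENNReal.toReal (two_mul_setLIntegral_hs_eq_succ hbranch hv p)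
      rwa [ENNReal.toReal_mul, ENNReal.toReal_mul, ENNReal.toReal_add
        (ENNReal.mul_ne_top (ENNReal.mul_ne_top (by simp) (hfin _)) (hfin _))
        (ENNReal.pow_ne_top (hfin _)),
        ENNReal.toReal_mul, ENNReal.toReal_mul, ENNReal.toReal_pow, ENNReal.toReal_ofReal hc,
        hF, hG] at this
    have hxf : x = f (p + 1) := by
      have : (x - f (p + 1)) * (1 - c * g p) = 0 := by linear_combination (hx - hf_succ p) / 2
      rcases mul_eq_zero.1 this with h | h
      · linarith
      · exact absurd (by linarith) (hcg p)
    refine ⟨hxf, ?_⟩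
    rw [setLIntegral_hs_le_succ, ENNReal.toReal_add (hfin _) (hfin _), hG, hg_succ, ← hxf]

variable [IsFiniteMeasure P]

theorem measure_hs_eq (p : ℕ) : P {t | t.hs = p} = ENNReal.ofReal (2 ^ (p + 1))⁻¹ := by
  rw [← setLIntegral_one]
  refine setLIntegral_hs_eq_ofReal hbranch (v := fun _ => 1) (c := 1)
    (f := fun p => (2 ^ (p + 1))⁻¹) (g := fun p => 1 - (2 ^ (p + 1))⁻¹) (fun _ => le_rfl)
    zero_le_one (fun _ _ => by simp) (by norm_num) (by norm_num) (fun p => ?_) (fun p => ?_)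
    (fun p => by simp) p
  · field_simp; ring
  · field_simp; ring

open Real in
theorem setLIntegral_hs_cosh_inv_pow_size {a : ℝ} (ha : 0 < a) (p : ℕ) :
    ∫⁻ t in {t | t.hs = p}, ENNReal.ofReal ((cosh a)⁻¹ ^ t.size) ∂P
      = ENNReal.ofReal (sinh a / sinh (2 ^ (p + 1) * a)) := by
  have hc : 0 ≤ (cosh a)⁻¹ := inv_nonneg.2 (cosh_pos a).le
  have hdouble (p : ℕ) : (2 : ℝ) ^ (p + 1 + 1) * a = 2 * (2 ^ (p + 1) * a) := by ring
  have hX (p : ℕ) : (2 : ℝ) ^ (p + 1) * a ≠ 0 := by positivity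
  refine setLIntegral_hs_eq_ofReal hbranch
    (v := fun t => ENNReal.ofReal ((cosh a)⁻¹ ^ t.size))
    (f := fun p => sinh a / sinh (2 ^ (p + 1) * a))
    (g := fun p => sinh (2 ^ (p + 1) * a - a) / sinh (2 ^ (p + 1) * a))
    (fun t => ENNReal.ofReal_le_one.2 (pow_le_one₀ hc (inv_le_one_of_one_le₀ (one_le_cosh a))))
    hc
    (fun x y => ?_) ?_ ?_ (fun p => ?_) (fun p => ?_) (fun p => ?_) p
  · rw [PTree.size_pair, pow_succ, pow_add, ENNReal.ofReal_mul (by positivity),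
      ENNReal.ofReal_mul (by positivity)]
    ring
  · simp [ENNReal.toReal_ofReal hc, sinh_div_sinh_two_mul ha.ne']
  · rw [show (2 : ℝ) ^ (0 + 1) * a - a = a by ring]
  · rw [hdouble]
    exact two_mul_sinh_div_sinh_two_mul a (hX p)
  · rw [hdouble]
    exact (sinh_sub_div_sinh_add_sinh_div_sinh_two_mul a (hX p)).symm
  · refine (inv_mul_lt_iff₀ (cosh_pos a) |>.2 ?_).ne
    rw [mul_one]
    exact sinh_sub_div_sinh_lt_cosh ha (by positivity)

end GaltonWatson

/-- The conditional expectation is written multiplied through by `P(S(τ) = p)`; the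
Galton–Watson law is encoded by the branching identity `hbranch`. -/
theorem stmt_17_general (P : Measure PTree) [IsProbabilityMeasure P]
    (hbranch : ∀ f : PTree → ENNReal,
      ∫⁻ t, f t ∂P
        = (1/2) * f (.node [])
          + (1/2) * ∫⁻ q : PTree × PTree, f (.node [q.1, q.2]) ∂(P.prod P))
    (p : ℕ) (s a : ℝ) (ha : 0 < a)
    (hcosh : Real.cosh a = 1/s) :
    ∫⁻ t in {t : PTree | t.hs = p}, ENNReal.ofReal (s ^ t.size) ∂P
      = ENNReal.ofReal ((2:ℝ) ^ (p+1) * Real.sinh a / Real.sinh ((2:ℝ) ^ (p+1) * a))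
        * P {t : PTree | t.hs = p} := by
  obtain rfl : s = (Real.cosh a)⁻¹ := by rw [hcosh, one_div, inv_inv]
  rw [setLIntegral_hs_cosh_inv_pow_size hbranch ha, measure_hs_eq hbranch,
    ← ENNReal.ofReal_mul' (by positivity)]
  congr 1
  field_simp

/-- Let `τ` be a critical binary Galton–Watson tree (each vertex
independently has `0` or `2` children with probability `1/2` each, expressed by the branching
identity `hbranch`). For all `p ∈ ℕ` and `s ∈ (0,1)`,
`E[s^{#τ} | S(τ) = p] = 2^{p+1}·sinh(a(s))/sinh(2^{p+1}·a(s))` where `a(s) > 0` is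
determined by `cosh(a(s)) = 1/s`; the conditional expectation is written multiplied through
by `P(S(τ) = p)`. -/
theorem stmt_17 (P : Measure PTree) [IsProbabilityMeasure P]
    (hbranch : ∀ f : PTree → ENNReal,
      ∫⁻ t, f t ∂P
        = (1/2) * f (.node [])
          + (1/2) * ∫⁻ q : PTree × PTree, f (.node [q.1, q.2]) ∂(P.prod P))
    (p : ℕ) (s a : ℝ) (hs₀ : 0 < s) (hs₁ : s < 1) (ha : 0 < a)
    (hcosh : Real.cosh a = 1/s) :
    ∫⁻ t in {t : PTree | t.hs = p}, ENNReal.ofReal (s ^ t.size) ∂P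
      = ENNReal.ofReal ((2:ℝ) ^ (p+1) * Real.sinh a / Real.sinh ((2:ℝ) ^ (p+1) * a))
        * P {t : PTree | t.hs = p} :=
  stmt_17_general P hbranch p s a ha hcosh
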